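/- Intermediate bound for the Markov-chain LP: let G have n vertices and maximum degree Δ > 1, let P be a local Markov chain with Gibbs stationary distribution μ satisfying ‖(P^t)_{x,·} - μ‖₁ ≤ c₁·n·(1-c₂/n)^t for all x ∈ S and t ≥ 0. Let f be supported on B with μ(f) = 0, let Λ ⊇ B with r = dist(B, Λ^c), and let ν ∈ LP_{Λ,MC}. Then for every integer t₁ ≥ 1, |ν(f)| ≤ 2·t₁·‖f‖_∞·8|B|·e^{v·t₁/n - r} + ‖f‖_∞·c₁·n·(1-c₂/n)^{t₁}, where v = e²(Δ-1). -/

import Mathlib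

namespace GibbsLP

variable {V : Type*} [Fintype V] [DecidableEq V]

/-- Spin configurations on the vertex set `V`; the two spin values `-1, +1` are
encoded by the two-element type `Bool`. -/
abbrev Config (V : Type*) := V → Bool

/-- The configuration `x` with the spin at site `i` flipped (denoted `xⁱ` in the paper). -/
def flip (x : Config V) (i : V) : Config V := Function.update x i (!x i)

/-- Discrete gradient `∇ᵢ f (x) = f(xⁱ) - f(x)`. -/
def grad (f : Config V → ℝ) (i : V) (x : Config V) : ℝ := f (flip x i) - f x

/-- `f` depends only on the spins in `Λ`, i.e. `supp f ⊆ Λ`. -/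
def SupportedOn (f : Config V → ℝ) (Λ : Set V) : Prop :=
  ∀ i ∉ Λ, ∀ x, f (flip x i) = f x

/-- The support `supp f = {i : ∇ᵢ f ≠ 0}` of an observable. -/
def sptSet (f : Config V → ℝ) : Set V := {i | ∃ x, f (flip x i) ≠ f x}

/-- Sup norm of an observable. -/
noncomputable def supNorm {α : Type*} (f : α → ℝ) : ℝ := ⨆ x, |f x|

/-- The Hamiltonian `H(x) = β ∑_{{i,j} ∈ E} h_{ij}(x_i, x_j)`; each unordered edge is
counted once (hence the factor `1/2` for the ordered double sum). -/
noncomputable def ham (G : SimpleGraph V) [DecidableRel G.Adj] (β : ℝ)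
    (h : V → V → Bool → Bool → ℝ) (x : Config V) : ℝ :=
  β * ((1 : ℝ) / 2 * ∑ i : V, ∑ j : V, if G.Adj i j then h i j (x i) (x j) else 0)

/-- The Gibbs distribution `μ(x) = e^{-H(x)} / Z`. -/
noncomputable def gibbs (H : Config V → ℝ) (x : Config V) : ℝ :=
  Real.exp (-H x) / ∑ y : Config V, Real.exp (-H y)

/-- `ν` is a probability distribution. -/
def IsDist {α : Type*} [Fintype α] (ν : α → ℝ) : Prop :=
  (∀ a, 0 ≤ ν a) ∧ ∑ a, ν a = 1

/-- Spin configurations on a subset `A ⊆ V`. -/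
abbrev SubConfig {V : Type*} (A : Finset V) := {i : V // i ∈ A} → Bool

/-- Restriction of a configuration to `A`. -/
def restrict (A : Finset V) (x : Config V) : SubConfig A := fun i => x i.1

/-- Extension of a configuration on `A` to all of `V` (by an arbitrary fixed value outside). -/
def extendC (A : Finset V) (y : SubConfig A) : Config V :=
  fun i => if h : i ∈ A then y ⟨i, h⟩ else true

/-- Flip the spin of `y : SubConfig A` at site `i` (identity if `i ∉ A`). -/
def flipAt (A : Finset V) (y : SubConfig A) (i : V) : SubConfig A :=
  fun j => if j.1 = i then !(y j) else y j

/-- External boundary `∂ᵉˣ Λ = {j ∉ Λ : ∃ i ∈ Λ, {i,j} ∈ E}`. -/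
def extBoundary (G : SimpleGraph V) [DecidableRel G.Adj] (Λ : Finset V) : Finset V :=
  Finset.univ.filter fun j => j ∉ Λ ∧ ∃ i ∈ Λ, G.Adj i j

/-- External boundary of a set of vertices (set version). -/
def extBoundarySet (G : SimpleGraph V) (A : Set V) : Set V :=
  {j | j ∉ A ∧ ∃ i ∈ A, G.Adj i j}

/-- `Λ̄ = Λ ∪ ∂ᵉˣ Λ`. -/
def closure (G : SimpleGraph V) [DecidableRel G.Adj] (Λ : Finset V) : Finset V :=
  Λ ∪ extBoundary G Λ

/-- `∇ᵢ H` evaluated on a configuration on `A` (well defined for `i ∈ Λ`, `A = Λ̄`, since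
then `∇ᵢ H` only depends on the spins in `Λ̄`). -/
noncomputable def gradH (A : Finset V) (H : Config V → ℝ) (i : V) (y : SubConfig A) : ℝ :=
  H (flip (extendC A y) i) - H (extendC A y)

/-- Expectation `ν(f)` of an observable `f` supported in `A` under a distribution `ν` on
`Σ^A`. -/
noncomputable def lexp {A : Finset V} (ν : SubConfig A → ℝ) (f : Config V → ℝ) : ℝ :=
  ∑ y : SubConfig A, ν y * f (extendC A y)

/-- The DLR linear program: distributions on `Σ^{Λ̄}` satisfying the local spin-flip
equations `ν(y) = ν(yⁱ) e^{∇ᵢH(y)}` for all `y` and `i ∈ Λ`. -/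
def LPdlr (G : SimpleGraph V) [DecidableRel G.Adj] (H : Config V → ℝ) (Λ : Finset V) :
    Set (SubConfig (closure G Λ) → ℝ) :=
  {ν | IsDist ν ∧ ∀ y, ∀ i ∈ Λ,
      ν y = ν (flipAt (closure G Λ) y i) * Real.exp (gradH (closure G Λ) H i y)}

/-- Values `ν(f)` over feasible points `ν` of the DLR linear program. -/
def dlrVals (G : SimpleGraph V) [DecidableRel G.Adj] (H : Config V → ℝ) (Λ : Finset V)
    (f : Config V → ℝ) : Set ℝ :=
  {t | ∃ ν ∈ LPdlr G H Λ, t = lexp ν f}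

/-- Marginal of a distribution `μ` on `Σ^V` on the sites in `A`. -/
noncomputable def marg (A : Finset V) (μ : Config V → ℝ) : SubConfig A → ℝ :=
  fun y => ∑ x : Config V, if restrict A x = y then μ x else 0

/-- The Hamiltonian truncated to `Λ` with boundary condition `η` on `∂ᵉˣ Λ`. -/
noncomputable def hamLoc (G : SimpleGraph V) [DecidableRel G.Adj] (β : ℝ)
    (h : V → V → Bool → Bool → ℝ) (Λ : Finset V)
    (η : SubConfig (extBoundary G Λ)) (x : SubConfig Λ) : ℝ :=
  β * ((1 : ℝ) / 2 * (∑ i ∈ Λ.attach, ∑ j ∈ Λ.attach,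
        if G.Adj i.1 j.1 then h i.1 j.1 (x i) (x j) else 0)
    + ∑ i ∈ Λ.attach, ∑ j ∈ (extBoundary G Λ).attach,
        if G.Adj i.1 j.1 then h i.1 j.1 (x i) (η j) else 0)

/-- The local Gibbs state `μ_Λ^η` on `Λ` with boundary condition `η`. -/
noncomputable def gibbsLoc (G : SimpleGraph V) [DecidableRel G.Adj] (β : ℝ)
    (h : V → V → Bool → Bool → ℝ) (Λ : Finset V)
    (η : SubConfig (extBoundary G Λ)) (x : SubConfig Λ) : ℝ :=
  Real.exp (-(hamLoc G β h Λ η x)) /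
    ∑ x' : SubConfig Λ, Real.exp (-(hamLoc G β h Λ η x'))

/-- Expectation `μ_Λ^η(f)` of an observable supported in `Λ` under the local Gibbs state. -/
noncomputable def gibbsLocExp (G : SimpleGraph V) [DecidableRel G.Adj] (β : ℝ)
    (h : V → V → Bool → Bool → ℝ) (Λ : Finset V)
    (η : SubConfig (extBoundary G Λ)) (f : Config V → ℝ) : ℝ :=
  ∑ x : SubConfig Λ, gibbsLoc G β h Λ η x * f (extendC Λ x)

/-- Combine `x ∈ Σ^Λ` and `η ∈ Σ^{∂ᵉˣΛ}` into a configuration `(x, η) ∈ Σ^{Λ̄}`. -/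
def glue (G : SimpleGraph V) [DecidableRel G.Adj] (Λ : Finset V)
    (x : SubConfig Λ) (η : SubConfig (extBoundary G Λ)) : SubConfig (closure G Λ) :=
  fun i => if h : i.1 ∈ Λ then x ⟨i.1, h⟩
    else η ⟨i.1, by
      have hi := i.2
      simp only [closure, Finset.mem_union] at hi
      tauto⟩

/-- A local (single-site, finite-range, bounded-rate) Markov chain on `Σ^V`. -/
structure IsLocalMC (G : SimpleGraph V) (P : Config V → Config V → ℝ) : Prop where
  nonneg : ∀ x x', 0 ≤ P x x'
  rowSum : ∀ x, ∑ x', P x x' = 1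
  /-- `P_{x,x'} = 0` if `x'` differs from `x` on more than one site. -/
  singleSite : ∀ x x', x' ≠ x → (∀ i, x' ≠ flip x i) → P x x' = 0
  /-- `P_{x,xⁱ}` only depends on the spins in the closed neighborhood of `i`. -/
  locality : ∀ i : V, ∀ x x' : Config V, x i = x' i →
      (∀ j, G.Adj i j → x j = x' j) → P x (flip x i) = P x' (flip x' i)
  /-- `P_{x,x'} ≤ 1/n` off the diagonal. -/
  bounded : ∀ x x', x ≠ x' → P x x' ≤ 1 / (Fintype.card V : ℝ)

/-- The Markov-chain linear program: distributions on `Σ^{Λ̄}` satisfying the stationarity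
equations `ν(Pg) = ν(g)` for all `g` supported on `Λ`. -/
def LPmc (G : SimpleGraph V) [DecidableRel G.Adj] (P : Config V → Config V → ℝ)
    (Λ : Finset V) : Set (SubConfig (closure G Λ) → ℝ) :=
  {ν | IsDist ν ∧ ∀ g : Config V → ℝ, SupportedOn g ↑Λ →
      lexp ν ((Matrix.of P).mulVec g) = lexp ν g}

/-- Values `ν(f)` over feasible points `ν` of the Markov-chain linear program. -/
def mcVals (G : SimpleGraph V) [DecidableRel G.Adj] (P : Config V → Config V → ℝ)
    (Λ : Finset V) (f : Config V → ℝ) : Set ℝ :=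
  {t | ∃ ν ∈ LPmc G P Λ, t = lexp ν f}

/-- The heat-bath dynamics: site `i` is flipped with probability
`c(i,x) = e^{-∇ᵢH(x)} / (1 + e^{-∇ᵢH(x)})`, each site being selected with probability `1/n`. -/
noncomputable def heatBath (H : Config V → ℝ) (x x' : Config V) : ℝ :=
  if x' = x then
    1 - (∑ i : V, Real.exp (-(grad H i x)) / (1 + Real.exp (-(grad H i x)))) /
      (Fintype.card V : ℝ)
  else
    ∑ i : V, if x' = flip x i then
      (Real.exp (-(grad H i x)) / (1 + Real.exp (-(grad H i x)))) / (Fintype.card V : ℝ)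
    else 0

/-- Marginal on `Σ^A` of a distribution on `Σ^B`, for `A ⊆ B`. -/
noncomputable def margTo {A B : Finset V} (hAB : A ⊆ B) (ν : SubConfig B → ℝ) :
    SubConfig A → ℝ :=
  fun z => ∑ y : SubConfig B,
    if (fun i : {i : V // i ∈ A} => y ⟨i.1, hAB i.2⟩) = z then ν y else 0

theorem closure_mono (G : SimpleGraph V) [DecidableRel G.Adj] {Λ Λ' : Finset V}
    (hs : Λ ⊆ Λ') : closure G Λ ⊆ closure G Λ' := by
  intro j hj
  simp only [closure, Finset.mem_union, extBoundary, Finset.mem_filter, Finset.mem_univ,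
    true_and] at hj ⊢
  by_cases hjΛ' : j ∈ Λ'
  · exact Or.inl hjΛ'
  · rcases hj with hj | ⟨hjn, i, hiΛ, hadj⟩
    · exact absurd (hs hj) hjΛ'
    · exact Or.inr ⟨hjΛ', i, hs hiΛ, hadj⟩


/-!
Write `g_t = P^t f`. Since `P` flips one spin at a time, at rate at most `1/n` and depending only
on the closed neighbourhood, the gradients of `g_t` obey
`|∇_j g_{t+1}| ≤ (1 + 1/n) |∇_j g_t| + (1/n) ∑_{i ∼ j} |∇_i g_t|`, starting from `2‖f‖_∞` on `B`.
Weighted by `e^{dist(B, j)}` (distance truncated at `r`), this recursion grows by at most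
`1 + (1 + eΔ)/n` per step, so the gradients of `g_t` outside `Λ` sum to at most
`2‖f‖_∞ |B| e^{t(1 + eΔ)/n - r}`. Hence `g_t` is that close to its truncation to `Λ`, for which
the constraint `ν(Pg) = ν(g)` holds exactly, and `|ν(g_t) - ν(g_{t+1})|` is at most twice as
much. Telescoping up to `t₁` and bounding `|ν(g_{t₁})|` by mixing (as `μ(f) = 0`) gives the
claim, using `1 + eΔ ≤ e²(Δ - 1)` for `Δ ≥ 2`.
-/

lemma flip_apply (x : Config V) (i k : V) : flip x i k = if k = i then !x i else x k :=
  Function.update_apply x i (!x i) k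

lemma flip_apply_of_ne (x : Config V) {i k : V} (h : k ≠ i) : flip x i k = x k :=
  Function.update_of_ne h _ x

@[simp]
lemma flip_flip (x : Config V) (i : V) : flip (flip x i) i = x := by
  funext k
  by_cases h : k = i <;> simp [flip_apply, h]

lemma flip_comm (x : Config V) (i j : V) : flip (flip x j) i = flip (flip x i) j := by
  funext k
  by_cases hki : k = i <;> by_cases hkj : k = j <;> simp_all [flip_apply]

lemma flip_ne (x : Config V) (i : V) : flip x i ≠ x := fun hx => by
  simpa [flip_apply] using congrFun hx i

lemma flip_injective (x : Config V) : Function.Injective (flip x) := fun i i' h => by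
  by_contra hne
  simpa [flip_apply, hne] using congrFun h i

lemma sum_flip_eq_sum_image (x : Config V) (F : Config V → ℝ) :
    ∑ i : V, F (flip x i) = ∑ x' ∈ Finset.univ.image (flip x), F x' :=
  (Finset.sum_image fun _ _ _ _ h => flip_injective x h).symm

def rate (P : Config V → Config V → ℝ) (i : V) (x : Config V) : ℝ := P x (flip x i)

noncomputable def spreadStep (G : SimpleGraph V) [DecidableRel G.Adj] (a : V → ℝ) (j : V) : ℝ :=
  (1 + 1 / (Fintype.card V : ℝ)) * a j
    + 1 / (Fintype.card V : ℝ) * ∑ i ∈ G.neighborFinset j, a i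

section LocalChain

variable {G : SimpleGraph V} {P : Config V → Config V → ℝ}

lemma IsLocalMC.sum_rate_le_one (hP : IsLocalMC G P) (x : Config V) :
    ∑ i : V, rate P i x ≤ 1 := by
  unfold rate
  rw [sum_flip_eq_sum_image, ← hP.rowSum x]
  exact Finset.sum_le_sum_of_subset_of_nonneg (Finset.subset_univ _)
    fun x' _ _ => hP.nonneg x x'

lemma IsLocalMC.mulVec_apply (hP : IsLocalMC G P) (g : Config V → ℝ) (x : Config V) :
    (Matrix.of P).mulVec g x = g x + ∑ i : V, rate P i x * (g (flip x i) - g x) := by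
  have hsplit : ∀ x', P x x' * g x' = P x x' * g x + P x x' * (g x' - g x) :=
    fun x' => by ring
  simp only [Matrix.mulVec, dotProduct, Matrix.of_apply, hsplit, Finset.sum_add_distrib,
    ← Finset.sum_mul, hP.rowSum, one_mul, rate]
  rw [sum_flip_eq_sum_image (F := fun x' => P x x' * (g x' - g x))]
  congr 1
  refine (Finset.sum_subset (Finset.subset_univ _) fun x' _ hx' => ?_).symm
  by_cases hxx : x' = x
  · simp [hxx]
  · have hnf : ∀ i, x' ≠ flip x i := fun i he =>
      hx' (he ▸ Finset.mem_image_of_mem _ (Finset.mem_univ i))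
    rw [hP.singleSite x x' hxx hnf, zero_mul]

lemma IsLocalMC.rate_flip_of_not_adj (hP : IsLocalMC G P) {i j : V} (hij : i ≠ j)
    (hadj : ¬G.Adj j i) (x : Config V) : rate P i (flip x j) = rate P i x :=
  hP.locality i _ _ (flip_apply_of_ne x hij) fun _ hk =>
    flip_apply_of_ne x fun hkj => hadj (hkj ▸ G.adj_symm hk)

lemma IsLocalMC.grad_mulVec_eq (hP : IsLocalMC G P) (g : Config V → ℝ) (j : V)
    (x : Config V) :
    grad ((Matrix.of P).mulVec g) j x =
      (1 - rate P j (flip x j) - rate P j x - ∑ i ∈ Finset.univ.erase j, rate P i (flip x j))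
          * grad g j x
        + ∑ i ∈ Finset.univ.erase j, rate P i (flip x j) * grad g j (flip x i)
        + ∑ i ∈ Finset.univ.erase j, (rate P i (flip x j) - rate P i x) * grad g i x := by
  have hterm : ∀ i ∈ Finset.univ.erase j,
      rate P i (flip x j) * (g (flip (flip x j) i) - g (flip x j))
          - rate P i x * (g (flip x i) - g x)
        = rate P i (flip x j) * grad g j (flip x i) - rate P i (flip x j) * grad g j x
          + (rate P i (flip x j) - rate P i x) * grad g i x := by
    intro i _
    rw [grad, grad, grad, flip_comm]
    ring
  rw [grad, hP.mulVec_apply, hP.mulVec_apply, add_sub_add_comm, ← Finset.sum_sub_distrib,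
    ← Finset.add_sum_erase _ _ (Finset.mem_univ j), Finset.sum_congr rfl hterm]
  simp only [flip_flip, Finset.sum_add_distrib, Finset.sum_sub_distrib,
    ← Finset.sum_mul, grad]
  ring

lemma IsLocalMC.abs_mulVec_le (hP : IsLocalMC G P) {φ : Config V → ℝ} {C : ℝ}
    (hφ : ∀ x, |φ x| ≤ C) (x : Config V) :
    |(Matrix.of P).mulVec φ x| ≤ C := by
  calc |(Matrix.of P).mulVec φ x| ≤ ∑ x', |P x x' * φ x'| := Finset.abs_sum_le_sum_abs _ _
    _ ≤ ∑ x', P x x' * C := Finset.sum_le_sum fun x' _ => by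
        rw [abs_mul, abs_of_nonneg (hP.nonneg x x')]
        exact mul_le_mul_of_nonneg_left (hφ x') (hP.nonneg x x')
    _ = C := by rw [← Finset.sum_mul, hP.rowSum, one_mul]

variable [DecidableRel G.Adj]

lemma IsLocalMC.sum_erase_rate_sub_mul_eq (hP : IsLocalMC G P) (φ : V → ℝ) (j : V)
    (x : Config V) :
    ∑ i ∈ Finset.univ.erase j, (rate P i (flip x j) - rate P i x) * φ i
      = ∑ i ∈ G.neighborFinset j, (rate P i (flip x j) - rate P i x) * φ i := by
  refine (Finset.sum_subset (fun i hi => Finset.mem_erase.mpr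
    ⟨(G.ne_of_adj ((G.mem_neighborFinset j i).mp hi)).symm, Finset.mem_univ i⟩) ?_).symm
  intro i hi hni
  rw [hP.rate_flip_of_not_adj (Finset.ne_of_mem_erase hi)
    (fun hadj => hni ((G.mem_neighborFinset j i).mpr hadj)), sub_self, zero_mul]

lemma IsLocalMC.abs_grad_mulVec_le (hP : IsLocalMC G P) {g : Config V → ℝ} {A : V → ℝ}
    (hA : ∀ k z, |grad g k z| ≤ A k) (j : V) (x : Config V) :
    |grad ((Matrix.of P).mulVec g) j x| ≤ spreadStep G A j := by
  set n : ℝ := (Fintype.card V : ℝ)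
  set y := flip x j
  set s := ∑ i ∈ Finset.univ.erase j, rate P i y
  have hc0 : ∀ i z, 0 ≤ rate P i z := fun i z => hP.nonneg _ _
  have hc1 : ∀ i z, rate P i z ≤ 1 / n := fun i z => hP.bounded _ _ (flip_ne z i).symm
  have hs : s + rate P j y ≤ 1 := by
    simpa only [← Finset.sum_erase_add _ _ (Finset.mem_univ j)] using hP.sum_rate_le_one y
  have hs0 : 0 ≤ s := Finset.sum_nonneg fun i _ => hc0 i y
  have hcoeff : |1 - rate P j y - rate P j x - s| + s ≤ 1 + 1 / n := by
    rcases abs_cases (1 - rate P j y - rate P j x - s) with ⟨he, _⟩ | ⟨he, _⟩ <;>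
      linarith [hc0 j x, hc0 j y, hc1 j x, hc1 j y]
  rw [hP.grad_mulVec_eq, hP.sum_erase_rate_sub_mul_eq]
  calc _ ≤ |1 - rate P j y - rate P j x - s| * A j
          + ∑ i ∈ Finset.univ.erase j, rate P i y * A j
          + ∑ i ∈ G.neighborFinset j, 1 / n * A i := by
        refine (abs_add_le _ _).trans (add_le_add ((abs_add_le _ _).trans (add_le_add ?_ ?_)) ?_)
        · rw [abs_mul]
          exact mul_le_mul_of_nonneg_left (hA j x) (abs_nonneg _)
        · refine (Finset.abs_sum_le_sum_abs _ _).trans (Finset.sum_le_sum fun i _ => ?_)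
          rw [abs_mul, abs_of_nonneg (hc0 i y)]
          exact mul_le_mul_of_nonneg_left (hA j _) (hc0 i y)
        · refine (Finset.abs_sum_le_sum_abs _ _).trans (Finset.sum_le_sum fun i _ => ?_)
          rw [abs_mul]
          refine mul_le_mul (abs_sub_le_iff.mpr ⟨?_, ?_⟩) (hA i x) (abs_nonneg _) (by positivity)
          · linarith [hc0 i x, hc1 i y]
          · linarith [hc0 i y, hc1 i x]
    _ = (|1 - rate P j y - rate P j x - s| + s) * A j
          + 1 / n * ∑ i ∈ G.neighborFinset j, A i := by
        rw [← Finset.sum_mul, Finset.mul_sum]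
        ring
    _ ≤ spreadStep G A j :=
        add_le_add_left (mul_le_mul_of_nonneg_right hcoeff ((abs_nonneg _).trans (hA j x))) _

lemma IsLocalMC.abs_grad_pow_mulVec_le (hP : IsLocalMC G P) {f : Config V → ℝ} {A : V → ℝ}
    (hA : ∀ k z, |grad f k z| ≤ A k) (t : ℕ) (j : V) (x : Config V) :
    |grad ((Matrix.of P ^ t).mulVec f) j x| ≤ (spreadStep G)^[t] A j := by
  induction t generalizing j x with
  | zero => simpa using hA j x
  | succ t ih =>
    rw [pow_succ', ← Matrix.mulVec_mulVec, Function.iterate_succ_apply']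
    exact hP.abs_grad_mulVec_le ih j x

end LocalChain

section Spread

variable {G : SimpleGraph V} [DecidableRel G.Adj]

lemma spreadStep_nonneg {a : V → ℝ} (ha : 0 ≤ a) : 0 ≤ spreadStep G a := fun j => by
  unfold spreadStep
  exact add_nonneg (mul_nonneg (by positivity) (ha j))
    (mul_nonneg (by positivity) (Finset.sum_nonneg fun i _ => ha i))

lemma iterate_spreadStep_nonneg {a : V → ℝ} (ha : 0 ≤ a) (t : ℕ) :
    0 ≤ (spreadStep G)^[t] a := by
  induction t with
  | zero => exact ha
  | succ t ih =>
    rw [Function.iterate_succ_apply']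
    exact spreadStep_nonneg ih

lemma sum_neighborFinset_mul_le {Δ : ℕ} (hdeg : ∀ v : V, G.degree v ≤ Δ) {a w : V → ℝ}
    (ha : 0 ≤ a) {L : ℝ} (hL : 0 ≤ L) (hw : ∀ i j, G.Adj i j → w j ≤ L * w i)
    (hw0 : 0 ≤ w) :
    ∑ j, w j * ∑ i ∈ G.neighborFinset j, a i ≤ L * Δ * ∑ i, w i * a i := by
  calc ∑ j, w j * ∑ i ∈ G.neighborFinset j, a i
      = ∑ i, a i * ∑ j ∈ G.neighborFinset i, w j := by
        simp only [Finset.mul_sum, SimpleGraph.neighborFinset_eq_filter, Finset.sum_filter]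
        rw [Finset.sum_comm]
        exact Finset.sum_congr rfl fun i _ => Finset.sum_congr rfl fun j _ => by
          simp only [G.adj_comm j i]; split_ifs <;> ring
    _ ≤ ∑ i, a i * (L * Δ * w i) := by
        refine Finset.sum_le_sum fun i _ => mul_le_mul_of_nonneg_left ?_ (ha i)
        calc ∑ j ∈ G.neighborFinset i, w j
            ≤ ∑ _j ∈ G.neighborFinset i, L * w i :=
              Finset.sum_le_sum fun j hj => hw i j ((G.mem_neighborFinset i j).mp hj)
          _ = G.degree i * (L * w i) := by
              rw [Finset.sum_const, G.card_neighborFinset_eq_degree, nsmul_eq_mul]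
          _ ≤ Δ * (L * w i) := by
              gcongr
              · exact mul_nonneg hL (hw0 i)
              · exact hdeg i
          _ = L * Δ * w i := by ring
    _ = L * Δ * ∑ i, w i * a i := by
        rw [Finset.mul_sum]
        exact Finset.sum_congr rfl fun i _ => by ring

lemma sum_mul_spreadStep_le {Δ : ℕ} (hdeg : ∀ v : V, G.degree v ≤ Δ) {a w : V → ℝ}
    (ha : 0 ≤ a) {L : ℝ} (hL : 0 ≤ L) (hw : ∀ i j, G.Adj i j → w j ≤ L * w i)
    (hw0 : 0 ≤ w) :
    ∑ j, w j * spreadStep G a j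
      ≤ (1 + (1 + L * Δ) / (Fintype.card V : ℝ)) * ∑ j, w j * a j := by
  have hsplit : ∑ j, w j * spreadStep G a j
      = (1 + 1 / (Fintype.card V : ℝ)) * ∑ j, w j * a j
        + 1 / (Fintype.card V : ℝ) * ∑ j, w j * ∑ i ∈ G.neighborFinset j, a i := by
    rw [Finset.mul_sum, Finset.mul_sum, ← Finset.sum_add_distrib]
    exact Finset.sum_congr rfl fun j _ => by unfold spreadStep; ring
  have hn : 0 ≤ 1 / (Fintype.card V : ℝ) := by positivity
  rw [hsplit]
  calc _ ≤ (1 + 1 / (Fintype.card V : ℝ)) * ∑ j, w j * a j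
        + 1 / (Fintype.card V : ℝ) * (L * Δ * ∑ i, w i * a i) := by
        gcongr
        exact sum_neighborFinset_mul_le hdeg ha hL hw hw0
    _ = _ := by ring

lemma sum_mul_iterate_spreadStep_le {Δ : ℕ} (hdeg : ∀ v : V, G.degree v ≤ Δ) {a w : V → ℝ}
    (ha : 0 ≤ a) {L : ℝ} (hL : 0 ≤ L) (hw : ∀ i j, G.Adj i j → w j ≤ L * w i)
    (hw0 : 0 ≤ w) (t : ℕ) :
    ∑ j, w j * (spreadStep G)^[t] a j
      ≤ Real.exp (t * ((1 + L * Δ) / (Fintype.card V : ℝ))) * ∑ j, w j * a j := by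
  have hq : 0 ≤ 1 + (1 + L * Δ) / (Fintype.card V : ℝ) := by positivity
  have hgrowth : ∑ j, w j * (spreadStep G)^[t] a j
      ≤ (1 + (1 + L * Δ) / (Fintype.card V : ℝ)) ^ t * ∑ j, w j * a j := by
    induction t with
    | zero => simp
    | succ t ih =>
      rw [Function.iterate_succ_apply', pow_succ', mul_assoc]
      exact (sum_mul_spreadStep_le hdeg (iterate_spreadStep_nonneg ha t) hL hw hw0).trans
        (mul_le_mul_of_nonneg_left ih hq)
  refine hgrowth.trans (mul_le_mul_of_nonneg_right ?_
    (Finset.sum_nonneg fun j _ => mul_nonneg (hw0 j) (ha j)))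
  rw [Real.exp_nat_mul]
  exact pow_le_pow_left₀ hq
    (by linarith [Real.add_one_le_exp ((1 + L * Δ) / (Fintype.card V : ℝ))]) t

end Spread

noncomputable def truncDist (G : SimpleGraph V) (B : Finset V) (r : ℕ) (j : V) : ℕ :=
  (min (B.inf fun b => G.edist b j) r).toNat

section TruncDist

variable {G : SimpleGraph V} {B : Finset V} {r : ℕ}

lemma truncDist_of_mem {j : V} (hj : j ∈ B) : truncDist G B r j = 0 := by
  have h0 : B.inf (fun b => G.edist b j) = 0 :=
    nonpos_iff_eq_zero.mp ((Finset.inf_le hj).trans (by simp))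
  simp [truncDist, h0]

lemma truncDist_of_forall_le {j : V} (h : ∀ b ∈ B, (r : ℕ∞) ≤ G.edist b j) :
    truncDist G B r j = r := by
  simp [truncDist, min_eq_right (Finset.le_inf h)]

lemma inf_edist_le_add_one {i j : V} (hadj : G.Adj i j) :
    B.inf (fun b => G.edist b j) ≤ B.inf (fun b => G.edist b i) + 1 := by
  rcases B.eq_empty_or_nonempty with rfl | hB
  · simp
  obtain ⟨b, hb, hbi⟩ := B.exists_mem_eq_inf hB fun b => G.edist b i
  rw [hbi, ← SimpleGraph.edist_eq_one_iff_adj.mpr hadj]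
  exact (Finset.inf_le hb).trans SimpleGraph.edist_triangle

lemma truncDist_le_add_one {i j : V} (hadj : G.Adj i j) :
    truncDist G B r j ≤ truncDist G B r i + 1 := by
  have hfin : ∀ k, min (B.inf fun b => G.edist b k) r ≠ ⊤ := fun k =>
    ne_top_of_le_ne_top (ENat.natCast_ne_top r) (min_le_right _ _)
  have hle : min (B.inf fun b => G.edist b j) r ≤ min (B.inf fun b => G.edist b i) r + 1 :=
    calc _ ≤ min (B.inf (fun b => G.edist b i) + 1) (r + 1) :=
          min_le_min (inf_edist_le_add_one hadj) le_self_add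
      _ = _ := min_add_add_right _ _ _
  unfold truncDist
  rw [← ENat.natCast_le_natCast, Nat.cast_add, ENat.natCast_toNat (hfin j),
    ENat.natCast_toNat (hfin i)]
  exact_mod_cast hle

end TruncDist

lemma sum_iterate_spreadStep_le_of_far {G : SimpleGraph V} [DecidableRel G.Adj] {Δ : ℕ}
    (hdeg : ∀ v : V, G.degree v ≤ Δ) {B S : Finset V} {r : ℕ}
    (hS : ∀ b ∈ B, ∀ j ∈ S, (r : ℕ∞) ≤ G.edist b j) {M : ℝ} (hM : 0 ≤ M) (t : ℕ) :
    ∑ j ∈ S, (spreadStep G)^[t] (fun k => if k ∈ B then M else 0) j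
      ≤ M * B.card * Real.exp (t * ((1 + Real.exp 1 * Δ) / (Fintype.card V : ℝ)) - r) := by
  set a : V → ℝ := fun k => if k ∈ B then M else 0
  set w : V → ℝ := fun k => Real.exp (truncDist G B r k)
  have ha : 0 ≤ a := fun k => by unfold a; split_ifs <;> simp [hM]
  have hw0 : 0 ≤ w := fun k => (Real.exp_pos _).le
  have hw : ∀ i j, G.Adj i j → w j ≤ Real.exp 1 * w i := fun i j hadj => by
    rw [← Real.exp_add, add_comm]
    exact Real.exp_le_exp.mpr (by exact_mod_cast truncDist_le_add_one hadj)
  have hwa : ∑ j, w j * a j = M * B.card := by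
    simp only [w, a, mul_ite, mul_zero, Finset.sum_ite_mem, Finset.univ_inter]
    rw [Finset.sum_congr rfl fun j hj => by rw [truncDist_of_mem hj, Nat.cast_zero,
      Real.exp_zero, one_mul], Finset.sum_const, nsmul_eq_mul, mul_comm]
  have hat := iterate_spreadStep_nonneg (G := G) ha t
  calc ∑ j ∈ S, (spreadStep G)^[t] a j
      = Real.exp (-r) * ∑ j ∈ S, w j * (spreadStep G)^[t] a j := by
        rw [Finset.mul_sum]
        refine Finset.sum_congr rfl fun j hj => ?_
        rw [show w j = Real.exp r by simp [w, truncDist_of_forall_le fun b hb => hS b hb j hj],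
          ← mul_assoc, ← Real.exp_add, neg_add_cancel, Real.exp_zero, one_mul]
    _ ≤ Real.exp (-r) * ∑ j, w j * (spreadStep G)^[t] a j := by
        gcongr
        · exact fun j _ _ => mul_nonneg (hw0 j) (hat j)
        · exact Finset.subset_univ S
    _ ≤ Real.exp (-r) * (Real.exp (t * ((1 + Real.exp 1 * Δ) / (Fintype.card V : ℝ)))
          * (M * B.card)) := by
        gcongr
        rw [← hwa]
        exact sum_mul_iterate_spreadStep_le hdeg ha (Real.exp_pos 1).le hw hw0 t
    _ = _ := by
        rw [sub_eq_neg_add, Real.exp_add]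
        ring

lemma abs_le_supNorm {α : Type*} [Finite α] (f : α → ℝ) (x : α) : |f x| ≤ supNorm f :=
  le_ciSup (Set.finite_range fun z => |f z|).bddAbove x

lemma supNorm_nonneg {α : Type*} (f : α → ℝ) : 0 ≤ supNorm f :=
  Real.iSup_nonneg fun x => abs_nonneg (f x)

lemma abs_grad_le_of_supportedOn {f : Config V → ℝ} {B : Finset V} (hf : SupportedOn f ↑B)
    (j : V) (x : Config V) : |grad f j x| ≤ if j ∈ B then 2 * supNorm f else 0 := by
  split_ifs with hj
  · calc |grad f j x| ≤ |f (flip x j)| + |f x| := abs_sub _ _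
      _ ≤ 2 * supNorm f := by linarith [abs_le_supNorm f (flip x j), abs_le_supNorm f x]
  · simp [grad, hf j (by simpa using hj) x]

lemma abs_sub_le_sum_of_abs_grad_le {g : Config V → ℝ} {A : V → ℝ}
    (hA : ∀ j z, |grad g j z| ≤ A j) {S : Finset V} {x y : Config V}
    (hxy : ∀ j ∉ S, x j = y j) : |g x - g y| ≤ ∑ j ∈ S, A j := by
  induction S using Finset.induction_on generalizing y with
  | empty => simp [funext fun j => hxy j (Finset.notMem_empty j)]
  | @insert i S hiS ih =>
    rw [Finset.sum_insert hiS]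
    by_cases hi : x i = y i
    · have hAi : 0 ≤ A i := (abs_nonneg _).trans (hA i x)
      have := ih fun j hj => by
        by_cases hji : j = i
        · exact hji ▸ hi
        · exact hxy j (by simp [hji, hj])
      linarith
    · have hxy' : ∀ j ∉ S, x j = flip y i j := fun j hj => by
        by_cases hji : j = i
        · subst hji
          rw [flip_apply, if_pos rfl]
          revert hi
          cases x j <;> cases y j <;> simp
        · rw [flip_apply_of_ne y hji]
          exact hxy j (by simp [hji, hj])
      calc |g x - g y| ≤ |g x - g (flip y i)| + |grad g i y| := abs_sub_le _ _ _
        _ ≤ ∑ j ∈ S, A j + A i := add_le_add (ih hxy') (hA i y)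
        _ = _ := add_comm _ _

lemma restrict_flip_of_notMem {Λ : Finset V} {i : V} (hi : i ∉ Λ) (x : Config V) :
    restrict Λ (flip x i) = restrict Λ x :=
  funext fun k => flip_apply_of_ne x fun hki => hi (hki ▸ k.2)

lemma supportedOn_comp_extendC_restrict (Λ : Finset V) (g : Config V → ℝ) :
    SupportedOn (fun x => g (extendC Λ (restrict Λ x))) ↑Λ := fun i hi x => by
  simp only [restrict_flip_of_notMem (Finset.mem_coe.not.mp hi)]

lemma extendC_restrict_of_mem {Λ : Finset V} {j : V} (hj : j ∈ Λ) (x : Config V) :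
    extendC Λ (restrict Λ x) j = x j := by
  simp [extendC, restrict, hj]

lemma IsLocalMC.abs_pow_mulVec_sub_restrict_le {G : SimpleGraph V} [DecidableRel G.Adj]
    {P : Config V → Config V → ℝ} (hP : IsLocalMC G P) {Δ : ℕ}
    (hdeg : ∀ v : V, G.degree v ≤ Δ) {B Λ : Finset V} {f : Config V → ℝ}
    (hf : SupportedOn f ↑B) {r : ℕ} (hr : ∀ i ∈ B, ∀ j ∉ Λ, (r : ℕ∞) ≤ G.edist i j)
    (t : ℕ) (z : Config V) :
    |(Matrix.of P ^ t).mulVec f z - (Matrix.of P ^ t).mulVec f (extendC Λ (restrict Λ z))|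
      ≤ 2 * supNorm f * B.card
        * Real.exp (t * ((1 + Real.exp 1 * Δ) / (Fintype.card V : ℝ)) - r) :=
  calc _ ≤ ∑ j ∈ Λᶜ, (spreadStep G)^[t] (fun k => if k ∈ B then 2 * supNorm f else 0) j :=
        abs_sub_le_sum_of_abs_grad_le
          (hP.abs_grad_pow_mulVec_le (abs_grad_le_of_supportedOn hf) t)
          fun j hj => (extendC_restrict_of_mem (by simpa using hj) z).symm
    _ ≤ _ := sum_iterate_spreadStep_le_of_far hdeg
        (fun b hb j hj => hr b hb j (Finset.mem_compl.mp hj))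
        (mul_nonneg zero_le_two (supNorm_nonneg f)) t

lemma abs_mulVec_le_of_sum_mul_eq_zero {α : Type*} [Fintype α] (Q : Matrix α α ℝ)
    {μ f : α → ℝ} (hmean : ∑ x, μ x * f x = 0) (z : α) :
    |Q.mulVec f z| ≤ supNorm f * ∑ x, |Q z x - μ x| := by
  have hcentre : Q.mulVec f z = ∑ x, (Q z x - μ x) * f x := by
    simp only [sub_mul, Finset.sum_sub_distrib, hmean, sub_zero]
    rfl
  rw [hcentre, Finset.mul_sum]
  refine (Finset.abs_sum_le_sum_abs _ _).trans (Finset.sum_le_sum fun x _ => ?_)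
  rw [abs_mul, mul_comm]
  exact mul_le_mul_of_nonneg_right (abs_le_supNorm f x) (abs_nonneg _)

section LinearProgram

variable {A : Finset V} {ν : SubConfig A → ℝ}

lemma lexp_sub (ν : SubConfig A → ℝ) (φ ψ : Config V → ℝ) :
    lexp ν (φ - ψ) = lexp ν φ - lexp ν ψ := by
  simp [lexp, mul_sub, Finset.sum_sub_distrib]

lemma IsDist.abs_lexp_le (hν : IsDist ν) {φ : Config V → ℝ} {C : ℝ} (hφ : ∀ x, |φ x| ≤ C) :
    |lexp ν φ| ≤ C := by
  calc |lexp ν φ| ≤ ∑ y, |ν y * φ (extendC A y)| := Finset.abs_sum_le_sum_abs _ _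
    _ ≤ ∑ y, ν y * C := Finset.sum_le_sum fun y _ => by
        rw [abs_mul, abs_of_nonneg (hν.1 y)]
        exact mul_le_mul_of_nonneg_left (hφ _) (hν.1 y)
    _ = C := by rw [← Finset.sum_mul, hν.2, one_mul]

lemma abs_lexp_sub_lexp_mulVec_le {G : SimpleGraph V} [DecidableRel G.Adj]
    {P : Config V → Config V → ℝ} (hP : IsLocalMC G P) {Λ : Finset V}
    {ν : SubConfig (closure G Λ) → ℝ} (hν : ν ∈ LPmc G P Λ) {g : Config V → ℝ} {ε : ℝ}
    (hg : ∀ z, |g z - g (extendC Λ (restrict Λ z))| ≤ ε) :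
    |lexp ν g - lexp ν ((Matrix.of P).mulVec g)| ≤ 2 * ε := by
  set gΛ : Config V → ℝ := fun z => g (extendC Λ (restrict Λ z))
  have hstat := hν.2 gΛ (supportedOn_comp_extendC_restrict Λ g)
  have hdecomp : lexp ν g - lexp ν ((Matrix.of P).mulVec g)
      = lexp ν (g - gΛ) - lexp ν ((Matrix.of P).mulVec (g - gΛ)) := by
    rw [Matrix.mulVec_sub, lexp_sub, lexp_sub, hstat]
    ring
  rw [hdecomp, two_mul]
  exact (abs_sub _ _).trans (add_le_add (hν.1.abs_lexp_le hg)
    (hν.1.abs_lexp_le (hP.abs_mulVec_le hg)))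

end LinearProgram

lemma abs_le_of_abs_sub_succ_le (u : ℕ → ℝ) {T : ℕ} {ε : ℝ}
    (hstep : ∀ t < T, |u t - u (t + 1)| ≤ ε) : |u 0| ≤ T * ε + |u T| := by
  induction T with
  | zero => simp
  | succ T ih =>
    have h1 := ih fun t ht => hstep t (Nat.lt_succ_of_lt ht)
    have h2 := abs_sub_abs_le_abs_sub (u T) (u (T + 1))
    have h3 := hstep T (Nat.lt_succ_self T)
    push_cast
    linarith

lemma mul_one_add_exp_mul_div_le {Δ : ℕ} (hΔ : 1 < Δ) {t t₁ : ℕ} (ht : t ≤ t₁) {n : ℝ}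
    (hn : 0 ≤ n) :
    t * ((1 + Real.exp 1 * Δ) / n) ≤ Real.exp 1 ^ 2 * ((Δ : ℝ) - 1) * t₁ / n := by
  have he := Real.exp_one_gt_d9
  have hΔ' : (2 : ℝ) ≤ Δ := by exact_mod_cast hΔ
  have hgap : 0 ≤ ((Δ : ℝ) - 2) * (Real.exp 1 ^ 2 - Real.exp 1) :=
    mul_nonneg (by linarith) (by nlinarith)
  have hconst : 1 + Real.exp 1 * Δ ≤ Real.exp 1 ^ 2 * ((Δ : ℝ) - 1) := by nlinarith
  rw [← mul_div_assoc, mul_comm _ (t₁ : ℝ)]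
  gcongr

theorem LPmc_intermediate_bound_general (G : SimpleGraph V) [DecidableRel G.Adj]
    (Δ : ℕ) (hΔ : 1 < Δ) (hdeg : ∀ v : V, G.degree v ≤ Δ)
    (β : ℝ) (h : V → V → Bool → Bool → ℝ)
    (P : Config V → Config V → ℝ) (hP : IsLocalMC G P)
    (c₁ c₂ : ℝ)
    (hmix : ∀ (t : ℕ) (x : Config V),
      ∑ x' : Config V, |(Matrix.of P ^ t) x x' - gibbs (ham G β h) x'| ≤
        c₁ * (Fintype.card V : ℝ) * (1 - c₂ / (Fintype.card V : ℝ)) ^ t)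
    (B Λ : Finset V)
    (f : Config V → ℝ) (hf : SupportedOn f ↑B)
    (hmean : ∑ x : Config V, gibbs (ham G β h) x * f x = 0)
    (r : ℕ) (hr : ∀ i ∈ B, ∀ j ∉ Λ, (r : ℕ∞) ≤ G.edist i j)
    (ν : SubConfig (closure G Λ) → ℝ) (hν : ν ∈ LPmc G P Λ)
    (t₁ : ℕ) :
    |lexp ν f| ≤
      2 * (t₁ : ℝ) * supNorm f * (8 * (B.card : ℝ)) *
          Real.exp (Real.exp 1 ^ 2 * ((Δ : ℝ) - 1) * t₁ / (Fintype.card V : ℝ) - r)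
        + supNorm f * (c₁ * (Fintype.card V : ℝ) *
            (1 - c₂ / (Fintype.card V : ℝ)) ^ t₁) := by
  set E := Real.exp (Real.exp 1 ^ 2 * ((Δ : ℝ) - 1) * t₁ / (Fintype.card V : ℝ) - r)
  set g : ℕ → Config V → ℝ := fun t => (Matrix.of P ^ t).mulVec f
  have hf0 := supNorm_nonneg f
  have htrunc : ∀ t ≤ t₁, ∀ z, |g t z - g t (extendC Λ (restrict Λ z))|
      ≤ 2 * supNorm f * B.card * E := fun t ht z =>
    (hP.abs_pow_mulVec_sub_restrict_le hdeg hf hr t z).trans (by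
      gcongr
      exact Real.exp_le_exp.mpr
        (sub_le_sub_right (mul_one_add_exp_mul_div_le hΔ ht (Nat.cast_nonneg _)) _))
  have hstep : ∀ t < t₁, |lexp ν (g t) - lexp ν (g (t + 1))|
      ≤ 2 * (2 * supNorm f * B.card * E) := fun t ht => by
    rw [show g (t + 1) = (Matrix.of P).mulVec (g t) by
      simp only [g, pow_succ', Matrix.mulVec_mulVec]]
    exact abs_lexp_sub_lexp_mulVec_le hP hν (htrunc t ht.le)
  have hend : |lexp ν (g t₁)|
      ≤ supNorm f * (c₁ * (Fintype.card V : ℝ) * (1 - c₂ / (Fintype.card V : ℝ)) ^ t₁) :=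
    hν.1.abs_lexp_le fun z => (abs_mulVec_le_of_sum_mul_eq_zero _ hmean z).trans
      (mul_le_mul_of_nonneg_left (hmix t₁ z) hf0)
  have htel := abs_le_of_abs_sub_succ_le (fun t => lexp ν (g t)) hstep
  simp only [g, pow_zero, Matrix.one_mulVec] at htel
  have hE : 0 ≤ t₁ * supNorm f * B.card * E := by positivity
  linarith

/-- **intermediate bound for the Markov-chain LP.** Under the fast-mixing
assumption, for `f` supported on `B ⊆ Λ` with `μ(f) = 0`, `r = dist(B,Λᶜ)` and any
`ν ∈ LP_{Λ,MC}`, every integer `t₁ ≥ 1` gives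
`|ν(f)| ≤ 2 t₁ ‖f‖_∞ 8|B| e^{v t₁/n - r} + ‖f‖_∞ c₁ n (1 - c₂/n)^{t₁}`, `v = e²(Δ-1)`. -/
theorem LPmc_intermediate_bound [Nonempty V] (G : SimpleGraph V) [DecidableRel G.Adj]
    (Δ : ℕ) (hΔ : 1 < Δ) (hdeg : ∀ v : V, G.degree v ≤ Δ)
    (β : ℝ) (hβ : 0 ≤ β) (h : V → V → Bool → Bool → ℝ)
    (hsym : ∀ i j a b, h i j a b = h i j b a) (hsym' : ∀ i j, h i j = h j i)
    (P : Config V → Config V → ℝ) (hP : IsLocalMC G P)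
    (hstat : ∀ x' : Config V,
      ∑ x : Config V, gibbs (ham G β h) x * P x x' = gibbs (ham G β h) x')
    (c₁ c₂ : ℝ) (hc₁ : 0 < c₁) (hc₂ : 0 < c₂) (hc₂n : c₂ < (Fintype.card V : ℝ))
    (hmix : ∀ (t : ℕ) (x : Config V),
      ∑ x' : Config V, |(Matrix.of P ^ t) x x' - gibbs (ham G β h) x'| ≤
        c₁ * (Fintype.card V : ℝ) * (1 - c₂ / (Fintype.card V : ℝ)) ^ t)
    (B Λ : Finset V) (hBΛ : B ⊆ Λ)
    (f : Config V → ℝ) (hf : SupportedOn f ↑B)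
    (hmean : ∑ x : Config V, gibbs (ham G β h) x * f x = 0)
    (r : ℕ) (hr : ∀ i ∈ B, ∀ j ∉ Λ, (r : ℕ∞) ≤ G.edist i j)
    (ν : SubConfig (closure G Λ) → ℝ) (hν : ν ∈ LPmc G P Λ)
    (t₁ : ℕ) (ht₁ : 1 ≤ t₁) :
    |lexp ν f| ≤
      2 * (t₁ : ℝ) * supNorm f * (8 * (B.card : ℝ)) *
          Real.exp (Real.exp 1 ^ 2 * ((Δ : ℝ) - 1) * t₁ / (Fintype.card V : ℝ) - r)
        + supNorm f * (c₁ * (Fintype.card V : ℝ) *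
            (1 - c₂ / (Fintype.card V : ℝ)) ^ t₁) :=
  LPmc_intermediate_bound_general G Δ hΔ hdeg β h P hP c₁ c₂ hmix B Λ f hf hmean r hr ν hν t₁

end GibbsLP
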